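/- arXiv:0809.3430 — 5 statements merged into one kernel-verified Lean document; each statement's English description precedes it below -/
import Mathlib

section
/- Let (A, ≤) be a well-founded partial order and let A₁, A₂ partition A. Let r denote ordinal height. Then r(A) ≤ r(A₁) ♯ r(A₂), where ♯ is the natural (Hessenberg) sum of ordinals. -/
universe u

namespace Ordinal

/-- Natural (Hessenberg) addition of ordinals, as in the older Mathlib's
`Mathlib/SetTheory/Ordinal/NaturalOps.lean`. -/
noncomputable def nadd (a b : Ordinal.{u}) : Ordinal.{u} :=
  max (⨆ x : Set.Iio a, Order.succ (nadd x.1 b)) (⨆ x : Set.Iio b, Order.succ (nadd a x.1))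
termination_by (a, b)
decreasing_by all_goals cases x; decreasing_tactic

end Ordinal

namespace NaturalOps

scoped infixl:65 " ♯ " => Ordinal.nadd

end NaturalOps

open scoped NaturalOps

/-!
The rank of `x` in `A` is at most `h₁ x ♯ h₂ x`, where `hᵢ x` is the height of the part of `Aᵢ`
strictly below `x`: every `y < x` lies in some `Aᵢ`, and then `hᵢ y < hᵢ x`, so `x ↦ h₁ x ♯ h₂ x`
is strictly monotone and hence dominates the rank. Since `x` itself lies in some `Aᵢ`, the same
argument bounds `rank x` strictly by `r(A₁) ♯ r(A₂)`.
-/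

namespace Ordinal

theorem nadd_strictMono_left (a : Ordinal.{u}) : StrictMono (· ♯ a) := fun b c h => by
  change b ♯ a < c ♯ a
  rw [nadd.eq_1 c a]
  exact (Order.lt_succ _).trans_le
    ((Ordinal.le_iSup _ (⟨b, h⟩ : Set.Iio c)).trans (le_max_left _ _))

theorem nadd_strictMono_right (a : Ordinal.{u}) : StrictMono (a ♯ ·) := fun b c h => by
  change a ♯ b < a ♯ c
  rw [nadd.eq_1 a c]
  exact (Order.lt_succ _).trans_le
    ((Ordinal.le_iSup _ (⟨b, h⟩ : Set.Iio c)).trans (le_max_right _ _))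

theorem nadd_lt_nadd_of_lt_or_lt {a b c d : Ordinal.{u}} (hab : a ≤ b) (hcd : c ≤ d)
    (h : a < b ∨ c < d) : a ♯ c < b ♯ d := by
  rcases h with hab' | hcd'
  · exact (nadd_strictMono_left c hab').trans_le ((nadd_strictMono_right b).monotone hcd)
  · exact ((nadd_strictMono_left c).monotone hab).trans_lt (nadd_strictMono_right b hcd')

end Ordinal

theorem WellFounded.rank_le_of_strictMono {α : Type u} {r : α → α → Prop} (hwf : WellFounded r)
    {f : α → Ordinal.{u}} (hf : ∀ a b, r a b → f a < f b) (a : α) :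
    (hwf.apply a).rank ≤ f a := by
  induction a using hwf.induction with
  | _ a ih =>
    rw [Acc.rank_eq]
    exact Ordinal.iSup_le fun b => Order.succ_le_of_lt ((ih b.1 b.2).trans_lt (hf _ _ b.2))

section HeightBelow

variable {A : Type*} [Preorder A] (hwf : WellFounded ((· < ·) : A → A → Prop)) (S : Set A)

noncomputable def heightBelow (x : A) : Ordinal :=
  ⨆ y : {y : S // (y : A) < x},
    Order.succ (((InvImage.wf (Subtype.val : S → A) hwf).apply y.1).rank)

theorem heightBelow_of_mem {x : A} (hx : x ∈ S) :
    heightBelow hwf S x = ((InvImage.wf (Subtype.val : S → A) hwf).apply ⟨x, hx⟩).rank := by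
  rw [Acc.rank_eq]
  rfl

theorem heightBelow_mono {x y : A} (h : y ≤ x) : heightBelow hwf S y ≤ heightBelow hwf S x :=
  Ordinal.iSup_le fun z => Ordinal.le_iSup _ (⟨z.1, z.2.trans_le h⟩ : {z : S // (z : A) < x})

theorem heightBelow_lt_of_mem_of_lt {x y : A} (hy : y ∈ S) (h : y < x) :
    heightBelow hwf S y < heightBelow hwf S x := by
  rw [heightBelow_of_mem hwf S hy, ← Order.succ_le_iff]
  exact Ordinal.le_iSup _ (⟨⟨y, hy⟩, h⟩ : {z : S // (z : A) < x})

theorem heightBelow_le_height (x : A) :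
    heightBelow hwf S x ≤
      ⨆ y : S, Order.succ (((InvImage.wf (Subtype.val : S → A) hwf).apply y).rank) :=
  Ordinal.iSup_le fun y => Ordinal.le_iSup _ y.1

theorem heightBelow_lt_height_of_mem {x : A} (hx : x ∈ S) :
    heightBelow hwf S x <
      ⨆ y : S, Order.succ (((InvImage.wf (Subtype.val : S → A) hwf).apply y).rank) := by
  rw [heightBelow_of_mem hwf S hx, ← Order.succ_le_iff]
  exact Ordinal.le_iSup _ (⟨x, hx⟩ : S)

end HeightBelow

theorem height_le_nadd_of_partition_general {A : Type*} [PartialOrder A]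
    (hwf : WellFounded ((· < ·) : A → A → Prop))
    (A₁ A₂ : Set A) (hunion : A₁ ∪ A₂ = Set.univ) :
    (⨆ x : A, Order.succ ((hwf.apply x).rank)) ≤
      (⨆ x : A₁, Order.succ (((InvImage.wf (Subtype.val : A₁ → A) hwf).apply x).rank)) ♯
      (⨆ x : A₂, Order.succ (((InvImage.wf (Subtype.val : A₂ → A) hwf).apply x).rank)) := by
  have hmem (x : A) : x ∈ A₁ ∨ x ∈ A₂ := by
    rw [← Set.mem_union, hunion]
    exact Set.mem_univ x
  have hrank (x : A) : (hwf.apply x).rank ≤ heightBelow hwf A₁ x ♯ heightBelow hwf A₂ x :=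
    hwf.rank_le_of_strictMono (fun y z hyz => Ordinal.nadd_lt_nadd_of_lt_or_lt
      (heightBelow_mono hwf A₁ hyz.le) (heightBelow_mono hwf A₂ hyz.le)
      ((hmem y).imp (heightBelow_lt_of_mem_of_lt hwf A₁ · hyz)
        (heightBelow_lt_of_mem_of_lt hwf A₂ · hyz))) x
  refine Ordinal.iSup_le fun x => Order.succ_le_of_lt ((hrank x).trans_lt ?_)
  exact Ordinal.nadd_lt_nadd_of_lt_or_lt
    (heightBelow_le_height hwf A₁ x) (heightBelow_le_height hwf A₂ x)
    ((hmem x).imp (heightBelow_lt_height_of_mem hwf A₁) (heightBelow_lt_height_of_mem hwf A₂))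

/-- If a well-founded partial order `A` is partitioned into `A₁` and `A₂`, then the
ordinal height of `A` is at most the natural (Hessenberg) sum of the ordinal heights
of `A₁` and `A₂` (each with the restricted order). -/
theorem height_le_nadd_of_partition {A : Type*} [PartialOrder A]
    (hwf : WellFounded ((· < ·) : A → A → Prop))
    (A₁ A₂ : Set A) (hunion : A₁ ∪ A₂ = Set.univ) (hdisj : Disjoint A₁ A₂) :
    (⨆ x : A, Order.succ ((hwf.apply x).rank)) ≤
      (⨆ x : A₁, Order.succ (((InvImage.wf (Subtype.val : A₁ → A) hwf).apply x).rank)) ♯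
      (⨆ x : A₂, Order.succ (((InvImage.wf (Subtype.val : A₂ → A) hwf).apply x).rank)) :=
  height_le_nadd_of_partition_general hwf A₁ A₂ hunion
end

section
/- Let (M, ·) be a monoid whose elements are finite strings and whose multiplication satisfies |s·t| ≤ max{|s|,|t|} + C for all s,t ∈ M (for a fixed constant C). Then for every n ≥ 1 and all s₁,…,s_n ∈ M, |s₁·s₂·⋯·s_n| ≤ max{|s₁|,…,|s_n|} + C·⌈log₂(n)⌉. -/
/-!
Split the product into a left half of `⌈n/2⌉` factors and a right half of `⌊n/2⌋` factors.
Each half obeys the bound with `⌈log₂ ⌈n/2⌉⌉ = ⌈log₂ n⌉ - 1` by induction, and the one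
multiplication joining them costs at most `C` more.
-/

section

variable {M : Type*} [Monoid M] (len : M → ℕ) (C : ℕ)

theorem Nat.clog_two_eq_clog_half_add_one {n : ℕ} (hn : 2 ≤ n) :
    Nat.clog 2 n = Nat.clog 2 ((n + 1) / 2) + 1 :=
  Nat.clog_of_two_le (by norm_num) hn

theorem len_prod_le_add_mul_clog
    (hC : ∀ s t : M, len (s * t) ≤ max (len s) (len t) + C)
    (l : List M) (hl : l ≠ []) (B : ℕ) (hB : ∀ x ∈ l, len x ≤ B) :
    len l.prod ≤ B + C * Nat.clog 2 l.length := by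
  induction hn : l.length using Nat.strong_induction_on generalizing l with
  | _ n ih =>
  have hn0 : n ≠ 0 := by rwa [← hn, Ne, List.length_eq_zero_iff]
  obtain hn1 | hn2 : n = 1 ∨ 2 ≤ n := by omega
  · obtain ⟨a, rfl⟩ := List.length_eq_one_iff.mp (hn.trans hn1)
    simpa [hn1] using hB a (by simp)
  set k := (n + 1) / 2
  have hlen_take : (l.take k).length = k := by simp [hn]; omega
  have hlen_drop : (l.drop k).length = n - k := by simp [hn]
  have hleft : len (l.take k).prod ≤ B + C * Nat.clog 2 k :=
    ih k (by omega) _ (by rw [← List.length_pos_iff]; omega)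
      (fun x hx => hB x (List.mem_of_mem_take hx)) hlen_take
  have hright : len (l.drop k).prod ≤ B + C * Nat.clog 2 k :=
    calc len (l.drop k).prod
        ≤ B + C * Nat.clog 2 (n - k) :=
          ih (n - k) (by omega) _ (by rw [← List.length_pos_iff]; omega)
            (fun x hx => hB x (List.mem_of_mem_drop hx)) hlen_drop
      _ ≤ B + C * Nat.clog 2 k := by gcongr; omega
  calc len l.prod
      = len ((l.take k).prod * (l.drop k).prod) := by
        rw [← List.prod_append, List.take_append_drop]
    _ ≤ max (len (l.take k).prod) (len (l.drop k).prod) + C := hC _ _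
    _ ≤ B + C * Nat.clog 2 k + C := by gcongr; exact max_le hleft hright
    _ = B + C * Nat.clog 2 n := by rw [Nat.clog_two_eq_clog_half_add_one hn2]; ring

end

theorem length_prod_le_sup_add_clog_general {Γ M : Type*} [Monoid M]
    (emb : M → List Γ) (C : ℕ)
    (hC : ∀ s t : M, (emb (s * t)).length ≤ max (emb s).length (emb t).length + C)
    (n : ℕ) (hn : 1 ≤ n) (s : Fin n → M) :
    (emb (List.ofFn s).prod).length ≤
      (Finset.univ.sup fun i => (emb (s i)).length) + C * Nat.clog 2 n := by
  have hne : List.ofFn s ≠ [] := by rw [← List.length_pos_iff, List.length_ofFn]; omega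
  have hle_sup : ∀ x ∈ List.ofFn s,
      (emb x).length ≤ Finset.univ.sup fun i => (emb (s i)).length := by
    intro _ hx
    obtain ⟨i, rfl⟩ := List.mem_ofFn.mp hx
    exact Finset.le_sup (f := fun j => (emb (s j)).length) (Finset.mem_univ i)
  simpa using len_prod_le_add_mul_clog (fun x => (emb x).length) C hC _ hne _ hle_sup

/-- Growth lemma for monoids: if the elements of a monoid `M` are (injectively encoded as)
finite strings and `|s·t| ≤ max{|s|,|t|} + C`, then for all `n ≥ 1` and `s₁,…,sₙ ∈ M`,
`|s₁·s₂⋯sₙ| ≤ max{|s₁|,…,|sₙ|} + C·⌈log₂ n⌉`. -/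
theorem length_prod_le_sup_add_clog {Γ M : Type*} [Monoid M]
    (emb : M → List Γ) (hemb : Function.Injective emb) (C : ℕ)
    (hC : ∀ s t : M, (emb (s * t)).length ≤ max (emb s).length (emb t).length + C)
    (n : ℕ) (hn : 1 ≤ n) (s : Fin n → M) :
    (emb (List.ofFn s).prod).length ≤
      (Finset.univ.sup fun i => (emb (s i)).length) + C * Nat.clog 2 n :=
  length_prod_le_sup_add_clog_general emb C hC n hn s
end

section
/- The free semigroup on two generators (e.g., ({0,1}⁺, concatenation)) admits no injective encoding of its elements as finite strings under which the length of a product is bounded by max of lengths of factors plus a constant; concretely, if |s·t| ≤ max{|s|,|t|} + C for all elements, then the set of elements generated from {0,1} in n+1 steps has size at most 2^{O(n)}, but the free semigroup generates at least 2^{2^n − 1} − 1 distinct elements in n+1 steps, a contradiction for large n. Hence the free semigroup on two generators is not word automatic. -/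
/-!
If `|e (s * t)| ≤ max |e s| |e t| + C`, then, since every word of length `≤ 2 ^ (n + 1)` is a
product of two words of length `≤ 2 ^ n`, all words of length `≤ 2 ^ n` have codes of length
`O(n)`. Over a `k`-letter alphabet there are only `(k + 1) ^ O(n) = 2 ^ O(n)` such codes, while an
injective code must distinguish the `2 ^ (2 ^ n - 1)` binary words of length `2 ^ n` that begin
with `true`.
-/

open Function

namespace FreeSemigroup

variable {α : Type*}

theorem exists_mul_eq_of_lt_length (x : FreeSemigroup α) {p : ℕ} (hp : 0 < p)
    (hpx : p < x.length) : ∃ y z : FreeSemigroup α, x = y * z ∧ y.length = p := by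
  obtain ⟨a, l⟩ := x
  have hp' : p - 1 < l.length := by simp only [length] at hpx; omega
  refine ⟨⟨a, l.take (p - 1)⟩, ⟨l[p - 1], l.drop p⟩, ?_, ?_⟩
  · have hdrop : l.drop (p - 1) = l[p - 1] :: l.drop p := by
      rw [List.drop_eq_getElem_cons hp', Nat.sub_add_cancel hp]
    rw [mk_mul_mk, ← hdrop, List.take_append_drop]
  · simp only [length, List.length_take]
    omega

theorem le_add_mul_of_length_le_two_pow (ℓ : FreeSemigroup α → ℕ) {C D : ℕ}
    (hmul : ∀ s t, ℓ (s * t) ≤ max (ℓ s) (ℓ t) + C) (hof : ∀ a, ℓ (of a) ≤ D) :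
    ∀ (n : ℕ) (x : FreeSemigroup α), x.length ≤ 2 ^ n → ℓ x ≤ D + C * n := by
  intro n
  induction n with
  | zero =>
    rintro ⟨a, l⟩ hx
    obtain rfl : l = [] := List.eq_nil_of_length_eq_zero (by simp only [length] at hx; omega)
    exact hof a
  | succ n ih =>
    intro x hx
    by_cases hshort : x.length ≤ 2 ^ n
    · linarith [ih x hshort]
    obtain ⟨y, z, rfl, hy⟩ := x.exists_mul_eq_of_lt_length (Nat.two_pow_pos n) (by omega)
    have hz : z.length ≤ 2 ^ n := by rw [length_mul, pow_succ] at hx; omega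
    have hyz := hmul y z
    have hy' := ih y hy.le
    have hz' := ih z hz
    rw [mul_add_one]
    omega

end FreeSemigroup

theorem Fintype.card_le_of_injective_of_length_le {ι β : Type*} [Fintype ι] [Fintype β]
    (f : ι → List β) (hf : Injective f) {N : ℕ} (hN : ∀ i, (f i).length ≤ N) :
    Fintype.card ι ≤ (Fintype.card β + 1) ^ N := by
  let g : ι → Fin N → Option β := fun i j => (f i)[(j : ℕ)]?
  have hg : Injective g := by
    refine fun i i' h => hf (List.ext_getElem? fun j => ?_)
    by_cases hj : j < N
    · exact congrFun h ⟨j, hj⟩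
    · rw [List.getElem?_eq_none (by grind), List.getElem?_eq_none (by grind)]
  simpa using Fintype.card_le_of_injective g hg

theorem Nat.exists_mul_add_lt_two_pow (A B : ℕ) : ∃ n, A * n + B < 2 ^ n := by
  obtain ⟨s, hA, hB⟩ : ∃ s, A < s ∧ B < s := ⟨A + B + 1, by omega, by omega⟩
  refine ⟨4 * s, ?_⟩
  calc A * (4 * s) + B < (2 * s) ^ 2 := by nlinarith
    _ < (2 ^ (2 * s)) ^ 2 := Nat.pow_lt_pow_left Nat.lt_two_pow_self two_ne_zero
    _ = 2 ^ (4 * s) := by rw [← pow_mul]; ring_nf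

open FreeSemigroup in
/-- The free semigroup on two generators admits no injective encoding of its elements
as finite strings over a finite alphabet under which the length of a product is bounded
by the maximum of the lengths of the factors plus a constant.  (Hence the free semigroup
on two generators is not word automatic.) -/
theorem freeSemigroup_not_word_automatic :
    ¬ ∃ (k C : ℕ) (e : FreeSemigroup Bool → List (Fin k)),
        Function.Injective e ∧
        ∀ s t : FreeSemigroup Bool,
          (e (s * t)).length ≤ max (e s).length (e t).length + C := by
  rintro ⟨k, C, e, he, hmul⟩
  set D := max (e (of true)).length (e (of false)).length
  obtain ⟨n, hn⟩ := Nat.exists_mul_add_lt_two_pow (k * C) (k * D + 1)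
  let w : (Fin (2 ^ n - 1) → Bool) → FreeSemigroup Bool := fun f => ⟨true, List.ofFn f⟩
  have hw : Injective w := fun f f' h => List.ofFn_injective (congrArg tail h)
  have hw_len : ∀ f, (w f).length ≤ 2 ^ n := fun f => by
    simp only [w, length, List.length_ofFn]; omega
  have hcode : ∀ f, (e (w f)).length ≤ D + C * n := fun f =>
    le_add_mul_of_length_le_two_pow (fun x => (e x).length) hmul
      (by rintro (_ | _) <;> simp [D]) n (w f) (hw_len f)
  have hcard := Fintype.card_le_of_injective_of_length_le (e ∘ w) (he.comp hw) hcode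
  simp only [Fintype.card_fun, Fintype.card_fin, Fintype.card_bool] at hcard
  have : 2 ^ (2 ^ n - 1) ≤ 2 ^ (k * (D + C * n)) := by
    calc 2 ^ (2 ^ n - 1) ≤ (k + 1) ^ (D + C * n) := hcard
      _ ≤ (2 ^ k) ^ (D + C * n) := Nat.pow_le_pow_left Nat.lt_two_pow_self _
      _ = 2 ^ (k * (D + C * n)) := (pow_mul _ _ _).symm
  rw [Nat.pow_le_pow_iff_right one_lt_two, mul_add, ← mul_assoc] at this
  omega
end

section
/- If a tree has only countably many infinite paths, then its Cantor–Bendixson rank is 0 or a successor ordinal. -/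
/-- The infinite paths of the subtree induced on `S`: infinite chains contained in `S`
that are closed under predecessors within `S`. -/
def treePaths {A : Type*} [PartialOrder A] (S : Set A) : Set (Set A) :=
  {P | P ⊆ S ∧ (∀ x ∈ P, ∀ y ∈ P, x ≤ y ∨ y ≤ x) ∧
    (∀ x ∈ P, ∀ y ∈ S, y ≤ x → y ∈ P) ∧ P.Infinite}

/-- The Cantor–Bendixson derivative of a subtree `S`: the nodes of `S` lying on at
least two distinct infinite paths of `S`. -/
def treeDeriv {A : Type*} [PartialOrder A] (S : Set A) : Set A :=
  {x ∈ S | ∃ P ∈ treePaths S, ∃ Q ∈ treePaths S, P ≠ Q ∧ x ∈ P ∧ x ∈ Q}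

/-- Iterated derivative: `d^{α+1}(T) = d(d^α(T))`, intersection at limits. -/
noncomputable def treeDerivIter {A : Type*} [PartialOrder A] (α : Ordinal) : Set A :=
  Ordinal.limitRecOn α (Set.univ : Set A) (fun _ ih => treeDeriv ih)
    (fun o _ ih => ⋂ (β : Set.Iio o), ih β.1 β.2)

/-- The Cantor–Bendixson rank of the tree: the least `α` with
`d^α(T) = d^{α+1}(T)`. -/
noncomputable def treeCBrank (A : Type*) [PartialOrder A] : Ordinal :=
  sInf {α | treeDerivIter (A := A) α = treeDerivIter (A := A) (α + 1)}

/-!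
Every stage `d^β(T)` is downward closed, so a nonempty stage contains the root. If the rank `λ`
were a limit, the stages `d^β(T)` with `β < λ` would be nonempty (an empty stage is already
fixed), so the root would lie in the fixed point `d^λ(T)`. But a nonempty subtree that equals its
own derivative is perfect: each node has two incomparable strict extensions, and following the
binary tree of such choices gives `2^ℵ₀` distinct infinite paths. The rank exists at all because
`d(T)` is covered by the countably many (countable) paths, so the decreasing stages below it can
strictly shrink only countably often.
-/

open Set

universe u v

theorem exists_eq_add_one_of_antitone {α : Type*} {s : Set α} [Small.{u} s]
    {f : Ordinal.{u} → Set α} (hf : Antitone f) (hs : ∀ o, f o ⊆ s) :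
    ∃ o, f o = f (o + 1) := by
  by_contra! h
  have hdrop : ∀ o, ∃ x ∈ f o, x ∉ f (o + 1) := fun o =>
    exists_of_ssubset ((hf le_self_add).ssubset_of_ne (h o).symm)
  choose x hxf hxn using hdrop
  refine not_injective_of_ordinal (fun o => (⟨x o, hs o (hxf o)⟩ : s))
    (Function.Injective.of_lt_imp_ne fun o o' hlt heq => hxn o ?_)
  rw [show x o = x o' from congrArg Subtype.val heq]
  exact hf (Order.add_one_le_of_lt hlt) (hxf o')

section Derivative

variable {A : Type*} [PartialOrder A]

theorem treeDeriv_subset (S : Set A) : treeDeriv S ⊆ S := fun _ hx => hx.1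

theorem isLowerSet_treeDeriv {S : Set A} (hS : IsLowerSet S) : IsLowerSet (treeDeriv S) := by
  rintro x y hyx ⟨hxS, P, hP, Q, hQ, hPQ, hxP, hxQ⟩
  have hyS : y ∈ S := hS hyx hxS
  exact ⟨hyS, P, hP, Q, hQ, hPQ, hP.2.2.1 x hxP y hyS hyx, hQ.2.2.1 x hxQ y hyS hyx⟩

theorem treeDerivIter_zero : treeDerivIter (A := A) 0 = univ :=
  Ordinal.limitRecOn_zero _ _ _

theorem treeDerivIter_succ (α : Ordinal) :
    treeDerivIter (A := A) (α + 1) = treeDeriv (treeDerivIter α) := by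
  rw [treeDerivIter, Ordinal.limitRecOn_add_one]
  rfl

theorem treeDerivIter_one : treeDerivIter (A := A) 1 = treeDeriv univ := by
  rw [← zero_add 1, treeDerivIter_succ, treeDerivIter_zero]

theorem treeDerivIter_limit {α : Ordinal} (h : Order.IsSuccLimit α) :
    treeDerivIter (A := A) α = ⋂ β : Iio α, treeDerivIter β.1 := by
  rw [treeDerivIter, Ordinal.limitRecOn_limit _ _ _ _ h]
  rfl

theorem treeDerivIter_antitone : Antitone (treeDerivIter (A := A)) := by
  intro β γ hβγ
  induction γ using Ordinal.limitRecOn with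
  | zero => rw [nonpos_iff_eq_zero.1 hβγ]
  | add_one γ ih =>
    rcases hβγ.lt_or_eq with hlt | rfl
    · rw [treeDerivIter_succ]
      exact (treeDeriv_subset _).trans (ih (Order.lt_add_one_iff.1 hlt))
    · rfl
  | limit γ hγ _ =>
    rcases hβγ.lt_or_eq with hlt | rfl
    · rw [treeDerivIter_limit hγ]
      exact iInter_subset (fun i : Iio γ => treeDerivIter i.1) ⟨β, hlt⟩
    · rfl

theorem isLowerSet_treeDerivIter (α : Ordinal) : IsLowerSet (treeDerivIter (A := A) α) := by
  induction α using Ordinal.limitRecOn with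
  | zero => rw [treeDerivIter_zero]; exact isLowerSet_univ
  | add_one β ih => rw [treeDerivIter_succ]; exact isLowerSet_treeDeriv ih
  | limit β hβ ih => rw [treeDerivIter_limit hβ]; exact isLowerSet_iInter fun i => ih i.1 i.2

end Derivative

section Paths

variable {A : Type*} [PartialOrder A]

theorem IsChain.countable_of_finite_Iic (hfin : ∀ x : A, (Iic x).Finite) {P : Set A}
    (hP : IsChain (· ≤ ·) P) : P.Countable := by
  refine countable_iff_exists_injOn.2 ⟨fun x => (Iic x).ncard, fun x hx y hy hxy => ?_⟩
  by_contra hne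
  have hlt (a b : A) (hab : a < b) : (Iic a).ncard < (Iic b).ncard :=
    ncard_lt_ncard (Iic_ssubset_Iic.2 hab) (hfin b)
  rcases hP.total hx hy with hle | hle
  · exact (hlt x y (hle.lt_of_ne hne)).ne hxy
  · exact (hlt y x (hle.lt_of_ne (Ne.symm hne))).ne' hxy

theorem countable_of_mem_treePaths (hfin : ∀ x : A, (Iic x).Finite) {S P : Set A}
    (hP : P ∈ treePaths S) : P.Countable :=
  IsChain.countable_of_finite_Iic hfin fun x hx y hy _ => hP.2.1 x hx y hy

theorem countable_treeDeriv_univ (hfin : ∀ x : A, (Iic x).Finite)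
    (hcount : (treePaths (univ : Set A)).Countable) : (treeDeriv (univ : Set A)).Countable := by
  refine (hcount.sUnion fun P hP => countable_of_mem_treePaths hfin hP).mono ?_
  rintro x ⟨-, P, hP, -, -, -, hxP, -⟩
  exact ⟨P, hP, hxP⟩

theorem lt_of_mem_treePaths_of_mem_diff {S P Q : Set A} (hP : P ∈ treePaths S)
    (hQ : Q ∈ treePaths S) {x y : A} (hxP : x ∈ P) (hxQ : x ∈ Q) (hy : y ∈ P \ Q) : x < y := by
  rcases hP.2.1 x hxP y hy.1 with hle | hle
  · exact hle.lt_of_ne fun h => hy.2 (h ▸ hxQ)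
  · exact absurd (hQ.2.2.1 x hxQ y (hP.1 hy.1) hle) hy.2

theorem incompRel_of_mem_diff {S P Q : Set A} (hP : P ∈ treePaths S) (hQ : Q ∈ treePaths S)
    {x y : A} (hx : x ∈ P \ Q) (hy : y ∈ Q \ P) : IncompRel (· ≤ ·) x y :=
  ⟨fun h => hx.2 (hQ.2.2.1 y hy.1 x (hP.1 hx.1) h),
    fun h => hy.2 (hP.2.2.1 x hx.1 y (hQ.1 hy.1) h)⟩

theorem diff_nonempty_of_mem_treePaths (hfin : ∀ x : A, (Iic x).Finite) {S P Q : Set A}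
    (hP : P ∈ treePaths S) (hQ : Q ∈ treePaths S) (hne : P ≠ Q) : (P \ Q).Nonempty := by
  rw [sdiff_nonempty]
  intro hPQ
  obtain ⟨q, hqQ, hqP⟩ := not_subset.1 fun hQP => hne (hPQ.antisymm hQP)
  refine hP.2.2.2 ((hfin q).subset fun p hpP => ?_)
  exact (hQ.2.1 p (hPQ hpP) q hqQ).resolve_right fun hqp => hqP (hP.2.2.1 p hpP q (hQ.1 hqQ) hqp)

theorem exists_incompRel_of_treeDeriv_eq (hfin : ∀ x : A, (Iic x).Finite) {S : Set A}
    (h : treeDeriv S = S) {x : A} (hx : x ∈ S) :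
    ∃ p ∈ S, ∃ q ∈ S, x < p ∧ x < q ∧ IncompRel (· ≤ ·) p q := by
  rw [← h] at hx
  obtain ⟨-, P, hP, Q, hQ, hPQ, hxP, hxQ⟩ := hx
  obtain ⟨p, hp⟩ := diff_nonempty_of_mem_treePaths hfin hP hQ hPQ
  obtain ⟨q, hq⟩ := diff_nonempty_of_mem_treePaths hfin hQ hP hPQ.symm
  exact ⟨p, hP.1 hp.1, q, hQ.1 hq.1, lt_of_mem_treePaths_of_mem_diff hP hQ hxP hxQ hp,
    lt_of_mem_treePaths_of_mem_diff hQ hP hxQ hxP hq, incompRel_of_mem_diff hP hQ hp hq⟩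

theorem lowerClosure_range_mem_treePaths
    (hlin : ∀ x y z : A, y ≤ x → z ≤ x → y ≤ z ∨ z ≤ y) {u : ℕ → A} (hu : StrictMono u) :
    (lowerClosure (range u) : Set A) ∈ treePaths univ := by
  refine ⟨subset_univ _, ?_, fun x hx y _ hyx => (lowerClosure _).lower hyx hx, ?_⟩
  · rintro x ⟨-, ⟨m, rfl⟩, hxm⟩ y ⟨-, ⟨n, rfl⟩, hyn⟩
    exact hlin (u (max m n)) x y (hxm.trans (hu.monotone (le_max_left m n)))
      (hyn.trans (hu.monotone (le_max_right m n)))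
  · exact (infinite_range_of_injective hu.injective).mono subset_lowerClosure

end Paths

def binaryBranch {A : Type*} (p q : A → A) (x : A) (a : ℕ → Bool) : ℕ → A
  | 0 => x
  | n + 1 => cond (a n) p q (binaryBranch p q x a n)

section CantorScheme

variable {A : Type*} {S : Set A} {p q : A → A} {x : A}

theorem binaryBranch_succ (a : ℕ → Bool) (n : ℕ) :
    binaryBranch p q x a (n + 1) = cond (a n) p q (binaryBranch p q x a n) :=
  rfl

theorem binaryBranch_mem (hpS : MapsTo p S S) (hqS : MapsTo q S S) (hx : x ∈ S)
    (a : ℕ → Bool) (n : ℕ) : binaryBranch p q x a n ∈ S := by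
  induction n with
  | zero => exact hx
  | succ n ih => rw [binaryBranch_succ]; cases a n; exacts [hqS ih, hpS ih]

variable [PartialOrder A]

theorem binaryBranch_strictMono (hpS : MapsTo p S S) (hqS : MapsTo q S S)
    (hp : ∀ y ∈ S, y < p y) (hq : ∀ y ∈ S, y < q y) (hx : x ∈ S) (a : ℕ → Bool) :
    StrictMono (binaryBranch p q x a) := by
  refine strictMono_nat_of_lt_succ fun n => ?_
  have hmem := binaryBranch_mem hpS hqS hx a n
  rw [binaryBranch_succ]
  cases a n; exacts [hq _ hmem, hp _ hmem]

/-- Distinct choice sequences lead to distinct paths: where they first differ, the branches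
pass through the incomparable nodes `p y` and `q y`. -/
theorem injective_lowerClosure_range_binaryBranch
    (hlin : ∀ x y z : A, y ≤ x → z ≤ x → y ≤ z ∨ z ≤ y) (hpS : MapsTo p S S)
    (hqS : MapsTo q S S) (hp : ∀ y ∈ S, y < p y) (hq : ∀ y ∈ S, y < q y)
    (hpq : ∀ y ∈ S, IncompRel (· ≤ ·) (p y) (q y)) (hx : x ∈ S) :
    Function.Injective fun a => (lowerClosure (range (binaryBranch p q x a)) : Set A) := by
  intro a b (hab : (lowerClosure (range (binaryBranch p q x a)) : Set A) =
    lowerClosure (range (binaryBranch p q x b)))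
  have hcomp (n : ℕ) :
      binaryBranch p q x a n ≤ binaryBranch p q x b n ∨
        binaryBranch p q x b n ≤ binaryBranch p q x a n := by
    have hmem (c : ℕ → Bool) : binaryBranch p q x c n ∈
        (lowerClosure (range (binaryBranch p q x c)) : Set A) :=
      subset_lowerClosure (mem_range_self n)
    exact (lowerClosure_range_mem_treePaths hlin (binaryBranch_strictMono hpS hqS hp hq hx a)).2.1
      _ (hmem a) _ (hab ▸ hmem b)
  have hchoice (n : ℕ) (hn : binaryBranch p q x a n = binaryBranch p q x b n) : a n = b n := by
    have hinc := hpq _ (binaryBranch_mem hpS hqS hx a n)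
    have h := hcomp (n + 1)
    rw [binaryBranch_succ, binaryBranch_succ, ← hn] at h
    revert h
    cases a n <;> cases b n <;> simp [hinc.1, hinc.2]
  have hnode (n : ℕ) : binaryBranch p q x a n = binaryBranch p q x b n := by
    induction n with
    | zero => rfl
    | succ n ih => rw [binaryBranch_succ, binaryBranch_succ, ih, hchoice n ih]
  exact funext fun n => hchoice n (hnode n)

end CantorScheme

section Rank

variable {A : Type u} [PartialOrder A]

theorem not_countable_treePaths_of_treeDeriv_eq (hfin : ∀ x : A, (Iic x).Finite)
    (hlin : ∀ x y z : A, y ≤ x → z ≤ x → y ≤ z ∨ z ≤ y) {S : Set A} (h : treeDeriv S = S)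
    (hS : S.Nonempty) : ¬ (treePaths (univ : Set A)).Countable := by
  obtain ⟨x, hx⟩ := hS
  choose! p hpS q hqS hp hq hpq using fun y (hy : y ∈ S) =>
    exists_incompRel_of_treeDeriv_eq hfin h hy
  have hinj := injective_lowerClosure_range_binaryBranch hlin hpS hqS hp hq hpq hx
  have hpath (a : ℕ → Bool) := lowerClosure_range_mem_treePaths hlin
    (binaryBranch_strictMono hpS hqS hp hq hx a)
  have : Uncountable (ℕ → Bool) := by
    rw [← Cardinal.aleph0_lt_mk_iff]
    simpa using Cardinal.cantor Cardinal.aleph0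
  intro hcount
  have := hcount.to_subtype
  exact not_countable ((injective_codRestrict hpath).2 hinj).countable

theorem exists_treeDerivIter_eq_add_one (hfin : ∀ x : A, (Iic x).Finite)
    (hcount : (treePaths (univ : Set A)).Countable) :
    ∃ α : Ordinal.{v}, treeDerivIter (A := A) α = treeDerivIter (α + 1) := by
  have := (countable_treeDeriv_univ hfin hcount).to_subtype
  obtain ⟨o, ho⟩ := exists_eq_add_one_of_antitone (s := treeDeriv univ)
    (f := fun o : Ordinal.{v} => treeDerivIter (A := A) (o + 1))
    (fun _ _ h => treeDerivIter_antitone (add_le_add_left h 1))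
    (fun o => treeDerivIter_one (A := A) ▸ treeDerivIter_antitone le_add_self)
  exact ⟨o + 1, ho⟩

theorem treeDeriv_treeDerivIter_treeCBrank
    (h : ∃ α : Ordinal.{v}, treeDerivIter (A := A) α = treeDerivIter (α + 1)) :
    treeDeriv (treeDerivIter (A := A) (treeCBrank.{u, v} A)) =
      treeDerivIter (treeCBrank.{u, v} A) := by
  rw [← treeDerivIter_succ]
  exact (csInf_mem h).symm

theorem treeDerivIter_nonempty_of_lt_treeCBrank {β : Ordinal.{v}} (hβ : β < treeCBrank A) :
    (treeDerivIter (A := A) β).Nonempty := by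
  rw [nonempty_iff_ne_empty]
  intro hempty
  refine notMem_of_lt_csInf hβ (OrderBot.bddBelow _) ?_
  rw [mem_ofPred_eq, treeDerivIter_succ, hempty]
  exact (subset_empty_iff.1 (treeDeriv_subset ∅)).symm

-- Since `sInf ∅ = 0`, the forward direction needs a stage where the derivative stabilises.
theorem treeCBrank_eq_zero_iff (hfin : ∀ x : A, (Iic x).Finite)
    (hcount : (treePaths (univ : Set A)).Countable) :
    treeCBrank.{u, v} A = 0 ↔ treeDeriv (univ : Set A) = univ := by
  constructor
  · intro h0
    have hfix := treeDeriv_treeDerivIter_treeCBrank (exists_treeDerivIter_eq_add_one hfin hcount)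
    rwa [h0, treeDerivIter_zero] at hfix
  · intro h
    refine nonpos_iff_eq_zero.1 (csInf_le' ?_)
    rw [mem_ofPred_eq, zero_add, treeDerivIter_one, treeDerivIter_zero, h]

theorem not_isSuccLimit_treeCBrank (r : A) (hr : ∀ x, r ≤ x) (hfin : ∀ x : A, (Iic x).Finite)
    (hlin : ∀ x y z : A, y ≤ x → z ≤ x → y ≤ z ∨ z ≤ y)
    (hcount : (treePaths (univ : Set A)).Countable) :
    ¬ Order.IsSuccLimit (treeCBrank.{u, v} A) := by
  intro hlim
  have hroot : r ∈ treeDerivIter (A := A) (treeCBrank A) := by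
    rw [treeDerivIter_limit hlim, mem_iInter]
    rintro ⟨β, hβ⟩
    obtain ⟨x, hx⟩ := treeDerivIter_nonempty_of_lt_treeCBrank hβ
    exact isLowerSet_treeDerivIter β (hr x) hx
  exact not_countable_treePaths_of_treeDeriv_eq hfin hlin
    (treeDeriv_treeDerivIter_treeCBrank (exists_treeDerivIter_eq_add_one hfin hcount))
    ⟨r, hroot⟩ hcount

end Rank

/-- If a (partial order) tree — a partial order with a least element whose predecessor
sets are finite and linearly ordered — has only countably many infinite paths, then its
Cantor–Bendixson rank is `0` or a successor ordinal. -/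
theorem treeCBrank_zero_or_succ_of_countable_paths {A : Type*} [PartialOrder A]
    (r : A) (hr : ∀ x, r ≤ x)
    (hfin : ∀ x : A, {y | y ≤ x}.Finite)
    (hlin : ∀ x y z : A, y ≤ x → z ≤ x → y ≤ z ∨ z ≤ y)
    (hcount : (treePaths (Set.univ : Set A)).Countable) :
    treeCBrank A = 0 ∨ ∃ β : Ordinal, treeCBrank A = β + 1 := by
  -- The two disjuncts speak of ranks in independent universes of ordinals, so the case split
  -- goes through the universe-free condition `d(T) = T`.
  by_cases hperfect : treeDeriv (univ : Set A) = univ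
  · exact Or.inl ((treeCBrank_eq_zero_iff hfin hcount).2 hperfect)
  right
  rcases Ordinal.zero_or_succ_or_isSuccLimit (treeCBrank A) with h | ⟨β, h⟩ | h
  · exact absurd ((treeCBrank_eq_zero_iff hfin hcount).1 h) hperfect
  · exact ⟨β, by rw [← h, Order.succ_eq_add_one]⟩
  · exact absurd h (not_isSuccLimit_treeCBrank r hr hfin hlin hcount)
end

section
/- There is no Borel function F : P(ℕ) → {0,1}^ℕ such that for all X, Y ⊆ ℕ: X =* Y if and only if F(X) = F(Y), where X =* Y means X and Y differ in only finitely many points. -/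
/-!
Put the fair-coin product measure on `ℕ → Bool`. If `F` were a Borel reduction, each coordinate
`x ↦ F x k` would be invariant under finite changes of `x`, so by Kolmogorov's 0-1 law it is
almost surely constant; hence `F` itself is almost surely constant. But a fibre of `F` is a single
`=*`-class, which is countable and therefore null.
-/

open MeasureTheory ProbabilityTheory Filter Set

theorem countable_setOf_finite_ne {α : Type*} [Countable α] (x : ℕ → α) :
    {y : ℕ → α | {n | y n ≠ x n}.Finite}.Countable := by
  classical
  refine (countable_range fun p : Σ s : Finset ℕ, (s → α) ↦
    fun n ↦ if h : n ∈ p.1 then p.2 ⟨n, h⟩ else x n).mono fun y hy ↦ ?_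
  exact ⟨⟨hy.toFinset, fun n ↦ y n⟩, funext fun n ↦ by by_cases h : y n = x n <;> simp [h]⟩

theorem Bool.exists_ae_eq_const {Ω : Type*} [MeasurableSpace Ω] {μ : Measure Ω}
    [IsProbabilityMeasure μ] {g : Ω → Bool} (hg : Measurable g)
    (h : μ {ω | g ω = true} = 0 ∨ μ {ω | g ω = true} = 1) : ∃ b, ∀ᵐ ω ∂μ, g ω = b := by
  rcases h with h | h
  · exact ⟨false, (measure_eq_zero_iff_ae_notMem.mp h).mono fun ω hω ↦ by simpa using hω⟩
  · exact ⟨true, (mem_ae_iff_prob_eq_one (hg (measurableSet_singleton true))).mpr h⟩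

section InfinitePi

variable {X : ℕ → Type*} [mX : ∀ n, MeasurableSpace (X n)]

theorem measurableSet_tail_of_finite_diff_invariant {A : Set (∀ n, X n)} (hA : MeasurableSet A)
    (hinv : ∀ x y : ∀ n, X n, {n | x n ≠ y n}.Finite → (x ∈ A ↔ y ∈ A)) :
    MeasurableSet[limsup (fun n ↦ (mX n).comap fun x : ∀ n, X n ↦ x n) atTop] A := by
  obtain rfl | ⟨x₀, -⟩ := A.eq_empty_or_nonempty
  · exact MeasurableSpace.measurableSet_empty _
  rw [limsup_eq_iInf_iSup_of_nat, MeasurableSpace.measurableSet_iInf]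
  intro n
  -- `A = g ⁻¹' A` by invariance, and `g` only reads the coordinates `≥ n`.
  let g : (∀ n, X n) → ∀ n, X n := fun x i ↦ if n ≤ i then x i else x₀ i
  have hg : Measurable[⨆ i ≥ n, (mX i).comap fun x : (∀ n, X n) ↦ x i] g := by
    refine @measurable_pi_lambda _ _ _ (⨆ i ≥ n, (mX i).comap fun x : (∀ n, X n) ↦ x i) _ g
      fun i ↦ ?_
    by_cases hi : n ≤ i
    · simp only [g, if_pos hi]
      exact (comap_measurable _).mono (le_iSup₂ (f := fun i (_ : i ≥ n) ↦
        (mX i).comap fun x : (∀ n, X n) ↦ x i) i hi) le_rfl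
    · simp only [g, if_neg hi]
      exact measurable_const
  have hA_eq : g ⁻¹' A = A := by
    ext x
    refine hinv _ _ ((finite_Iio n).subset fun i hi ↦ ?_)
    by_contra h
    exact hi (if_pos (not_lt.mp h))
  exact hA_eq ▸ hg hA

variable (μ : ∀ n, Measure (X n)) [∀ n, IsProbabilityMeasure (μ n)]

theorem iIndep_comap_eval_infinitePi :
    iIndep (fun n ↦ (mX n).comap fun x : ∀ n, X n ↦ x n) (Measure.infinitePi μ) :=
  (iIndepFun_iff_iIndep _ _ _).mp (iIndepFun_infinitePi (X := fun _ ↦ id) fun _ ↦ measurable_id)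

theorem infinitePi_eq_zero_or_one_of_finite_diff_invariant {A : Set (∀ n, X n)}
    (hA : MeasurableSet A)
    (hinv : ∀ x y : ∀ n, X n, {n | x n ≠ y n}.Finite → (x ∈ A ↔ y ∈ A)) :
    Measure.infinitePi μ A = 0 ∨ Measure.infinitePi μ A = 1 :=
  measure_zero_or_one_of_measurableSet_limsup_atTop (fun n ↦ (measurable_pi_apply n).comap_le)
    (iIndep_comap_eval_infinitePi μ) (measurableSet_tail_of_finite_diff_invariant hA hinv)

theorem exists_ae_eq_const_of_finite_diff_invariant {ι : Type*} [Countable ι]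
    {F : (∀ n, X n) → ι → Bool} (hF : Measurable F)
    (hinv : ∀ x y : ∀ n, X n, {n | x n ≠ y n}.Finite → F x = F y) :
    ∃ z, ∀ᵐ x ∂Measure.infinitePi μ, F x = z := by
  have hcoord (k : ι) : ∃ b, ∀ᵐ x ∂Measure.infinitePi μ, F x k = b :=
    Bool.exists_ae_eq_const (measurable_pi_apply k |>.comp hF) <|
      infinitePi_eq_zero_or_one_of_finite_diff_invariant μ
        (hF (measurable_pi_apply k (measurableSet_singleton true)))
        fun x y hxy ↦ by simp [hinv x y hxy]
  choose z hz using hcoord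
  exact ⟨z, (ae_all_iff.mpr hz).mono fun x hx ↦ funext hx⟩

theorem MeasureTheory.Measure.infinitePi_singleton_eq_zero [∀ n, MeasurableSingletonClass (X n)]
    {c : ENNReal} (hc : c < 1) (x : ∀ n, X n) (hx : ∀ n, μ n {x n} ≤ c) :
    Measure.infinitePi μ {x} = 0 := by
  have hle (k : ℕ) : Measure.infinitePi μ {x} ≤ c ^ k := calc
    Measure.infinitePi μ {x} ≤ Measure.infinitePi μ ((Finset.range k : Set ℕ).pi fun n ↦ {x n}) :=
      measure_mono fun y hy n _ ↦ by rw [mem_singleton_iff.mp hy]; rfl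
    _ = ∏ n ∈ Finset.range k, μ n {x n} :=
      Measure.infinitePi_pi _ fun n _ ↦ measurableSet_singleton _
    _ ≤ c ^ k := by simpa using Finset.prod_le_pow_card (Finset.range k) _ _ fun n _ ↦ hx n
  exact le_antisymm (ge_of_tendsto' (ENNReal.tendsto_pow_atTop_nhds_zero_of_lt_one hc) hle) bot_le

end InfinitePi

/-- There is no Borel function `F : P(ℕ) → {0,1}^ℕ` (with `P(ℕ)` identified with Cantor
space `ℕ → Bool` with the product topology) such that `X =* Y ↔ F X = F Y`, where
`X =* Y` means `X` and `Y` differ in only finitely many points.  Borel means measurable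
with respect to the Borel σ-algebras of the topology. -/
theorem no_borel_reduction_of_eqStar :
    ¬ ∃ F : (ℕ → Bool) → (ℕ → Bool),
      @Measurable _ _ (borel (ℕ → Bool)) (borel (ℕ → Bool)) F ∧
      ∀ X Y : ℕ → Bool, {n | X n ≠ Y n}.Finite ↔ F X = F Y := by
  rintro ⟨F, hF_borel, hF⟩
  have hF_meas : Measurable F := by rwa [BorelSpace.measurable_eq (α := ℕ → Bool)]
  let μ := Measure.infinitePi fun _ : ℕ ↦ uniformOn (univ : Set Bool)
  have : NullSingletonClass μ := ⟨fun x ↦ Measure.infinitePi_singleton_eq_zero _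
    ENNReal.one_half_lt_one x fun n ↦ by rw [uniformOn_univ]; simp⟩
  obtain ⟨z, hz⟩ := exists_ae_eq_const_of_finite_diff_invariant (fun _ ↦ uniformOn univ) hF_meas
    fun x y ↦ (hF x y).mp
  obtain ⟨x₀, hx₀⟩ := hz.exists
  have h_null := measure_eq_zero_iff_ae_notMem.mp ((countable_setOf_finite_ne x₀).measure_zero μ)
  obtain ⟨x, hxz, hx⟩ := (hz.and h_null).exists
  exact hx ((hF x x₀).mpr (hxz.trans hx₀.symm))
end
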